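/- arXiv:2302.04020 — 3 statements merged into one kernel-verified Lean document; each statement's English description precedes it below -/
import Mathlib

section
/- With the seed mutation μ_k(e_i) = e_i + [ε_{ki}]_+ e_k (i ≠ k), μ_k(e_k) = -e_k, and f_i = d_i^{-1}e_i^* the rescaled dual basis, the mutated dual vectors satisfy μ_k(f_i) = f_i for i ≠ k and μ_k(f_k) = -f_k + Σ_j [-ε_{jk}]_+ f_j, where μ_k(f_i) := d_i^{-1} μ_k(e_i)^* is the rescaled dual basis of the mutated basis. -/
/-! A functional equals `b'.coord i` as soon as it takes the values `δ_ij` on `b'`, and the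
claimed formulas do so on `μ_k(e_j)` because `ε_kk = 0`. Rescaling by `d⁻¹` matches the
coefficients `[ε_kj]_+ / d_k = [-ε_jk]_+ / d_j`, since both `ε_kj / d_k` and `-ε_jk / d_j`
equal `{e_k, e_j}`. -/

namespace Module.Basis

variable {R V ι : Type*} [CommRing R] [AddCommGroup V] [Module R V] [DecidableEq ι]

theorem coord_eq_of_apply_eq (b : Basis ι R V) (i : ι) (φ : V →ₗ[R] R)
    (h : ∀ j, φ (b j) = if j = i then 1 else 0) : b.coord i = φ :=
  b.ext fun j => by simp [h, Finsupp.single_apply]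

variable (b b' : Basis ι R V) (c : ι → R) (k : ι)

theorem coord_mutation_of_ne (hb' : ∀ i, b' i = if i = k then -b k else b i + c i • b k)
    {i : ι} (hik : i ≠ k) : b'.coord i = b.coord i :=
  b'.coord_eq_of_apply_eq i (b.coord i) fun j => by
    by_cases hjk : j = k
    · subst hjk
      simp [hb', hik.symm]
    · simp [hb', hjk, Finsupp.single_apply, hik.symm]

theorem coord_mutation_self [Fintype ι]
    (hb' : ∀ i, b' i = if i = k then -b k else b i + c i • b k) (hc : c k = 0) :
    b'.coord k = -b.coord k + ∑ j, c j • b.coord j :=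
  b'.coord_eq_of_apply_eq k _ fun j => by
    by_cases hjk : j = k
    · subst hjk
      simp [hb', hc, Finsupp.single_apply]
    · simp [hb', hjk, Finsupp.single_apply, mul_add, Finset.sum_add_distrib, hc, Ne.symm hjk]

end Module.Basis

theorem max_zero_div_eq_of_div_eq {α : Type*} [Field α] [LinearOrder α] [IsStrictOrderedRing α]
    {a b p q : α} (hp : 0 < p) (hq : 0 < q) (h : a / p = b / q) :
    max 0 a / p = max 0 b / q := by
  rw [← max_div_div_right hp.le, ← max_div_div_right hq.le, zero_div, zero_div, h]

/-- Mutation of the rescaled dual basis vectors `f_i = d_i⁻¹ e_i^*`: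
`μ_k(f_i) = f_i` for `i ≠ k` and `μ_k(f_k) = -f_k + Σ_j [-ε_{jk}]_+ f_j`. -/
theorem stmt4 {V ι : Type*} [AddCommGroup V] [Module ℚ V] [Fintype ι] [DecidableEq ι]
    (b : Module.Basis ι ℚ V)
    (B : V →ₗ[ℚ] V →ₗ[ℚ] ℚ) (hskew : ∀ x y, B x y = -B y x)
    (d : ι → ℚ) (hd : ∀ i, 0 < d i)
    (ε : ι → ι → ℚ) (hε : ∀ i j, ε i j = d i * B (b i) (b j))
    (k : ι)
    (b' : Module.Basis ι ℚ V)
    (hb' : ∀ i, b' i = if i = k then -b k else b i + (max 0 (ε k i)) • b k) :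
    (∀ i, i ≠ k → (d i)⁻¹ • b'.coord i = (d i)⁻¹ • b.coord i) ∧
    (d k)⁻¹ • b'.coord k =
      -((d k)⁻¹ • b.coord k) + ∑ j, (max 0 (-(ε j k))) • ((d j)⁻¹ • b.coord j) := by
  have hB : ∀ i j, ε i j / d i = B (b i) (b j) := fun i j => by
    rw [hε, mul_div_cancel_left₀ _ (hd i).ne']
  have hεkk : ε k k = 0 := by
    rw [hε, show B (b k) (b k) = 0 by linarith [hskew (b k) (b k)], mul_zero]
  refine ⟨fun i hik => congrArg _ (b.coord_mutation_of_ne b' _ k hb' hik), ?_⟩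
  rw [b.coord_mutation_self b' _ k hb' (by simp [hεkk]), smul_add, smul_neg, Finset.smul_sum]
  refine congrArg _ (Finset.sum_congr rfl fun j _ => ?_)
  rw [smul_smul, smul_smul, inv_mul_eq_div, ← div_eq_mul_inv]
  congr 1
  exact max_zero_div_eq_of_div_eq (hd k) (hd j) (by rw [hB, neg_div, hB, hskew])
end

section
/- The exchange matrix transforms under seed mutation by the standard rule: if ε_{ij} = d_i{e_i,e_j} and e_i' = μ_k(e_i) as defined by e_i' = e_i + [ε_{ki}]_+ e_k (i ≠ k), e_k' = -e_k, then ε'_{ij} := d_i{e_i', e_j'} satisfies ε'_{ij} = -ε_{ij} if k ∈ {i,j}, and ε'_{ij} = ε_{ij} + ε_{ik}[ε_{kj}]_+ + [-ε_{ik}]_+ε_{kj} otherwise. -/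
/-!
Only the terms of `{e_i', e_j'}` involving `e_k` change. They are controlled by skew-symmetry
(`{e_k, e_k} = 0`) and by the skew-symmetrizability `d_i ε_{ki} = -d_k ε_{ik}`, which for positive
`d` passes to positive parts: `d_i [ε_{ki}]_+ = d_k [-ε_{ik}]_+`.
-/

namespace LinearMap.IsAlt

variable {R M : Type*} [CommRing R] [AddCommGroup M] [Module R M] {B : M →ₗ[R] M →ₗ[R] R}

theorem apply_add_smul_neg (H : B.IsAlt) (x z : M) (a : R) : B (x + a • z) (-z) = -B x z := by
  simp [H.self_eq_zero]

theorem apply_neg_add_smul (H : B.IsAlt) (y z : M) (a : R) : B (-z) (y + a • z) = -B z y := by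
  simp [H.self_eq_zero]

theorem apply_add_smul_add_smul (H : B.IsAlt) (x y z : M) (a c : R) :
    B (x + a • z) (y + c • z) = B x y + a * B z y + c * B x z := by
  simp only [map_add, map_smul, LinearMap.add_apply, LinearMap.smul_apply, smul_eq_mul,
    H.self_eq_zero]
  ring

end LinearMap.IsAlt

theorem max_zero_mul_eq_max_zero_mul {R : Type*} [Ring R] [LinearOrder R] [IsOrderedRing R]
    {x y c e : R} (hc : 0 ≤ c) (he : 0 ≤ e) (h : x * c = y * e) :
    max 0 x * c = max 0 y * e := by
  rw [max_mul_of_nonneg _ _ hc, max_mul_of_nonneg _ _ he, zero_mul, zero_mul, h]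

/-- The exchange matrix `ε_{ij} = d_i {e_i, e_j}` transforms under seed mutation
`e_i' = e_i + [ε_{ki}]_+ e_k (i ≠ k)`, `e_k' = -e_k` by the standard matrix mutation rule. -/
theorem stmt5 {V ι : Type*} [AddCommGroup V] [Module ℚ V] [DecidableEq ι]
    (b : Module.Basis ι ℚ V)
    (B : V →ₗ[ℚ] V →ₗ[ℚ] ℚ) (hskew : ∀ x y, B x y = -B y x)
    (d : ι → ℚ) (hd : ∀ i, 0 < d i)
    (ε : ι → ι → ℚ) (hε : ∀ i j, ε i j = d i * B (b i) (b j))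
    (k : ι)
    (e' : ι → V)
    (he' : ∀ i, e' i = if i = k then -b k else b i + (max 0 (ε k i)) • b k) :
    ∀ i j, d i * B (e' i) (e' j) =
      if i = k ∨ j = k then -(ε i j)
      else ε i j + ε i k * max 0 (ε k j) + max 0 (-(ε i k)) * ε k j := by
  have hB : B.IsAlt := LinearMap.isAlt_iff_eq_neg_flip.mpr (by ext x y; exact hskew x y)
  intro i j
  by_cases hi : i = k <;> by_cases hj : j = k
  · subst hi hj
    simp [he', hε, hB.self_eq_zero]
  · subst hi
    rw [he', he', if_pos rfl, if_neg hj, if_pos (Or.inl rfl), hB.apply_neg_add_smul, hε]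
    ring
  · subst hj
    rw [he', he', if_pos rfl, if_neg hi, if_pos (Or.inr rfl), hB.apply_add_smul_neg, hε]
    ring
  · have hweight : max 0 (ε k i) * d i = max 0 (-ε i k) * d k :=
      max_zero_mul_eq_max_zero_mul (hd i).le (hd k).le
        (by rw [hε, hε, hskew (b i) (b k)]; ring)
    rw [he', he', if_neg hi, if_neg hj, if_neg (not_or.mpr ⟨hi, hj⟩), hB.apply_add_smul_add_smul]
    linear_combination B (b k) (b j) * hweight - hε i j - max 0 (ε k j) * hε i k
      - max 0 (-ε i k) * hε k j
end

section
/- Assuming sign coherence of c-vectors (for each t and j, the entries c_{ij;t} over i all have the same sign), the following holds: if v = Σ_{i frozen} a_i e_i with all a_i ≥ 0 in an initial seed, then for every t in the mutation tree the tropical degree Σ_i a_i c_{li;t} of the mutated monomial μ_t^*(z^v) in a variable X_l is nonnegative for every l. Consequently, if μ_t^*(z^v) is a Laurent polynomial in the cluster variables of seed s_t, it is in fact a polynomial. -/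
/-- Matrix mutation in direction `k`. -/
def mutMat {ι : Type*} [DecidableEq ι] (M : Matrix ι ι ℤ) (k : ι) : Matrix ι ι ℤ :=
  fun i j => if i = k ∨ j = k then -M i j
    else M i j + M i k * max 0 (M k j) + max 0 (-(M i k)) * M k j

/-- One mutation step of the pair (exchange matrix, C-matrix) at direction `k`. -/
def cStep {n : ℕ} (p : Matrix (Fin n) (Fin n) ℤ × Matrix (Fin n) (Fin n) ℤ) (k : Fin n) :
    Matrix (Fin n) (Fin n) ℤ × Matrix (Fin n) (Fin n) ℤ :=
  (mutMat p.1 k,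
   fun i j => if j = k then -p.2 i k
     else p.2 i j + p.2 i k * max 0 (p.1 k j) + max 0 (-(p.2 i k)) * p.1 k j)

/-!
The weights `a_i` live on frozen indices only, and a frozen c-vector has the positive entry
`c_{ii;t} = 1`; sign coherence then forces the whole c-vector to be nonnegative, so every term
`a_i c_{li;t}` of the tropical degree is nonnegative.
-/

theorem nonneg_of_signCoherent_of_pos {ι : Type*} {c : ι → ℤ}
    (hsc : (∀ i, 0 ≤ c i) ∨ ∀ i, c i ≤ 0) {i₀ : ι} (hpos : 0 < c i₀) (i : ι) : 0 ≤ c i :=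
  hsc.elim (· i) fun hnonpos => absurd (hnonpos i₀) hpos.not_ge

theorem stmt10_general {n : ℕ}
    (uf : Fin n → Prop)
    (cmat : List (Fin n) → Matrix (Fin n) (Fin n) ℤ)
    (hsc : ∀ L, (∀ k ∈ L, uf k) → ∀ j, (∀ i, 0 ≤ cmat L i j) ∨ (∀ i, cmat L i j ≤ 0))
    (hfr : ∀ L, (∀ k ∈ L, uf k) → ∀ i, ¬ uf i → cmat L i i = 1)
    (a : Fin n → ℤ) (ha : ∀ i, 0 ≤ a i) (hsupp : ∀ i, uf i → a i = 0) :
    ∀ L, (∀ k ∈ L, uf k) → ∀ l, 0 ≤ ∑ i, a i * cmat L l i := by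
  intro L hL l
  refine Finset.sum_nonneg fun i _ => ?_
  by_cases hi : uf i
  · simp [hsupp i hi]
  · have hdiag : 0 < cmat L i i := by rw [hfr L hL i hi]; exact one_pos
    exact mul_nonneg (ha i) (nonneg_of_signCoherent_of_pos (hsc L hL i) hdiag l)

/-- Assuming sign coherence of c-vectors and that `c_{ii;t} = 1` for frozen `i`, a monomial
`z^v` with `v = Σ_{i frozen} a_i e_i`, `a_i ≥ 0`, has nonnegative tropical degree
`Σ_i a_i c_{li;t} ≥ 0` in every variable `X_l` and every seed `s_t` reached by mutations at
unfrozen indices (hence a universally Laurent `μ_t^*(z^v)` is universally polynomial). -/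
theorem stmt10 {n : ℕ} (ε : Matrix (Fin n) (Fin n) ℤ)
    (uf : Fin n → Prop)
    (cmat : List (Fin n) → Matrix (Fin n) (Fin n) ℤ)
    (hcmat : ∀ L, cmat L = (L.foldl cStep (ε, 1)).2)
    (hsc : ∀ L, (∀ k ∈ L, uf k) → ∀ j, (∀ i, 0 ≤ cmat L i j) ∨ (∀ i, cmat L i j ≤ 0))
    (hfr : ∀ L, (∀ k ∈ L, uf k) → ∀ i, ¬ uf i → cmat L i i = 1)
    (a : Fin n → ℤ) (ha : ∀ i, 0 ≤ a i) (hsupp : ∀ i, uf i → a i = 0) :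
    ∀ L, (∀ k ∈ L, uf k) → ∀ l, 0 ≤ ∑ i, a i * cmat L l i :=
  stmt10_general uf cmat hsc hfr a ha hsupp
end
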